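/- Superstability for Hilbert spaces with a group of automorphisms: let G be a countable group, π a unitary representation of G on H, a₁,…,aₙ ∈ H, A ⊆ H, and ε > 0. Let C be the closed linear span of {π(g)a : g ∈ G, a ∈ A}. Then there exist b₁,…,bₙ ∈ H and a finite A₀ ⊆ A such that ‖aᵢ − bᵢ‖ < ε for all i, and for each i, bᵢ − P_{C₀}(bᵢ) is orthogonal to C ⊖ C₀ where C₀ is the closed linear span of {π(g)a : g ∈ G, a ∈ A₀} — indeed one may take bᵢ = aᵢ − P_C(aᵢ) + P_{C₀}(aᵢ). -/

import Mathlib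

/-!
Each `P_C aᵢ` lies in the closed span of the orbits of `A`, so it is `ε`-close to a vector in the
span of the orbits of finitely many points of `A`; collect these points into `A₀`. As `C₀ ≤ C`,
`P_{C₀} aᵢ = P_{C₀} (P_C aᵢ)` is the best approximation of `P_C aᵢ` in `C₀`, whence
`‖aᵢ - bᵢ‖ = ‖P_C aᵢ - P_{C₀} aᵢ‖ < ε`; and `bᵢ - P_{C₀} bᵢ = aᵢ - P_C aᵢ` is orthogonal to all of `C`.
-/

open scoped InnerProductSpace

open Submodule

/-- For `f = fun g x => π g x` this is the union of the `G`-orbits of the points of `A`. -/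
def orbitsOf {ι α E : Type*} (f : ι → α → E) (A : Set α) : Set E :=
  {v | ∃ i, ∃ x ∈ A, v = f i x}

section Approximation

variable {ι α R E : Type*} {f : ι → α → E} {A B : Set α}

theorem orbitsOf_mono (h : A ⊆ B) : orbitsOf f A ⊆ orbitsOf f B := by
  rintro v ⟨i, x, hx, rfl⟩
  exact ⟨i, x, h hx, rfl⟩

theorem exists_finset_mem_span_orbitsOf [Semiring R] [AddCommMonoid E] [Module R E] {v : E}
    (hv : v ∈ span R (orbitsOf f A)) :
    ∃ A₀ : Finset α, ↑A₀ ⊆ A ∧ v ∈ span R (orbitsOf f A₀) := by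
  classical
  induction hv using Submodule.span_induction with
  | mem v hv =>
    obtain ⟨i, x, hx, rfl⟩ := hv
    exact ⟨{x}, by simpa using hx, subset_span ⟨i, x, by simp, rfl⟩⟩
  | zero => exact ⟨∅, by simp, zero_mem _⟩
  | add v w _ _ hv hw =>
    obtain ⟨A₁, hA₁, hv⟩ := hv
    obtain ⟨A₂, hA₂, hw⟩ := hw
    refine ⟨A₁ ∪ A₂, by simpa using Set.union_subset hA₁ hA₂, add_mem ?_ ?_⟩
    · exact span_mono (orbitsOf_mono (by simp)) hv
    · exact span_mono (orbitsOf_mono (by simp)) hw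
  | smul r v _ hv =>
    obtain ⟨A₀, hA₀, hv⟩ := hv
    exact ⟨A₀, hA₀, smul_mem _ r hv⟩

theorem exists_finset_forall_dist_lt [Semiring R] [SeminormedAddCommGroup E] [Module R E]
    [ContinuousConstSMul R E] {κ : Type*} [Fintype κ] {v : κ → E}
    (hv : ∀ k, v k ∈ (span R (orbitsOf f A)).topologicalClosure) {ε : ℝ} (hε : 0 < ε) :
    ∃ A₀ : Finset α, ↑A₀ ⊆ A ∧ ∀ k, ∃ s ∈ span R (orbitsOf f A₀), dist (v k) s < ε := by
  classical
  have hclose (k : κ) : ∃ s ∈ span R (orbitsOf f A), dist (v k) s < ε :=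
    Metric.mem_closure_iff.mp (hv k) ε hε
  choose s hs hdist using hclose
  choose A₀ hA₀ hsA₀ using fun k => exists_finset_mem_span_orbitsOf (hs k)
  refine ⟨Finset.univ.biUnion A₀, by simpa using fun k => hA₀ k, fun k => ⟨s k, ?_, hdist k⟩⟩
  exact span_mono (orbitsOf_mono (by simpa using Set.subset_iUnion (fun k => (A₀ k : Set α)) k))
    (hsA₀ k)

end Approximation

section Projection

variable {𝕜 E : Type*} [RCLike 𝕜] [NormedAddCommGroup E] [InnerProductSpace 𝕜 E]
  {K₀ K : Submodule 𝕜 E} [K₀.HasOrthogonalProjection] [K.HasOrthogonalProjection]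

theorem Submodule.norm_sub_starProjection_le (x : E) {s : E} (hs : s ∈ K) :
    ‖x - K.starProjection x‖ ≤ ‖x - s‖ := by
  rw [starProjection_minimal]
  exact ciInf_le ⟨0, by rintro _ ⟨y, rfl⟩; exact norm_nonneg _⟩ (⟨s, hs⟩ : K)

theorem Submodule.norm_starProjection_sub_starProjection_le_of_le (h : K₀ ≤ K) (x : E) {s : E}
    (hs : s ∈ K₀) : ‖K.starProjection x - K₀.starProjection x‖ ≤ ‖K.starProjection x - s‖ := by
  have hproj : K₀.starProjection (K.starProjection x) = K₀.starProjection x :=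
    congrArg Subtype.val (orthogonalProjectionOnto_starProjection_of_le h x)
  simpa only [hproj] using norm_sub_starProjection_le (K.starProjection x) hs

theorem Submodule.sub_starProjection_add_sub_starProjection_of_le (h : K₀ ≤ K) (x : E) :
    x - K.starProjection x + K₀.starProjection x -
      K₀.starProjection (x - K.starProjection x + K₀.starProjection x) =
      x - K.starProjection x := by
  have hperp : x - K.starProjection x ∈ K₀ᗮ :=
    orthogonal_le h (sub_starProjection_mem_orthogonal x)
  rw [map_add, (starProjection_apply_eq_zero_iff K₀).mpr hperp, starProjection_eq_self_iff.mpr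
    (starProjection_apply_mem K₀ x)]
  abel

end Projection

theorem superstable_general
    {G : Type*} [Group G] {H : Type*}
    [NormedAddCommGroup H] [InnerProductSpace ℂ H] [CompleteSpace H]
    (π : G →* (H ≃ₗᵢ[ℂ] H)) (n : ℕ) (a : Fin n → H) (A : Set H) (ε : ℝ) (hε : 0 < ε) :
    ∃ (b : Fin n → H) (A₀ : Finset H), ↑A₀ ⊆ A ∧
      (letI C := (Submodule.span ℂ {v : H | ∃ (g : G), ∃ x ∈ A, v = π g x}).topologicalClosure
       letI C₀ :=
         (Submodule.span ℂ {v : H | ∃ (g : G), ∃ x ∈ (↑A₀ : Set H), v = π g x}).topologicalClosure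
       ∀ i : Fin n,
         b i = a i - (C.orthogonalProjectionOnto (a i) : H) + (C₀.orthogonalProjectionOnto (a i) : H) ∧
         ‖a i - b i‖ < ε ∧
         ∀ v ∈ C, v ∈ C₀ᗮ →
           ⟪b i - (C₀.orthogonalProjectionOnto (b i) : H), v⟫_ℂ = 0) := by
  let orbitSpan (B : Set H) := (span ℂ (orbitsOf (fun (g : G) x => π g x) B)).topologicalClosure
  obtain ⟨A₀, hA₀, happrox⟩ := exists_finset_forall_dist_lt (R := ℂ)
    (v := fun i => (orbitSpan A).starProjection (a i)) (fun i => starProjection_apply_mem _ _) hε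
  have hle : orbitSpan A₀ ≤ orbitSpan A :=
    topologicalClosure_mono (span_mono (orbitsOf_mono hA₀))
  refine ⟨fun i => a i - (orbitSpan A).starProjection (a i) + (orbitSpan A₀).starProjection (a i),
    A₀, hA₀, fun i => ⟨rfl, ?_, fun v hv _ => ?_⟩⟩
  · obtain ⟨s, hs, hdist⟩ := happrox i
    calc ‖a i - (a i - (orbitSpan A).starProjection (a i) + (orbitSpan A₀).starProjection (a i))‖
        = ‖(orbitSpan A).starProjection (a i) - (orbitSpan A₀).starProjection (a i)‖ := by
          congr 1; abel
      _ ≤ ‖(orbitSpan A).starProjection (a i) - s‖ :=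
          norm_starProjection_sub_starProjection_le_of_le hle _ (le_topologicalClosure _ hs)
      _ < ε := by rwa [← dist_eq_norm]
  · show ⟪_ - (orbitSpan A₀).starProjection _, v⟫_ℂ = 0
    rw [sub_starProjection_add_sub_starProjection_of_le hle]
    exact inner_left_of_mem_orthogonal hv (sub_starProjection_mem_orthogonal _)

/-- Superstability for Hilbert spaces with a group of automorphisms: given
`a₁, …, aₙ ∈ H`, `A ⊆ H` and `ε > 0`, with `C` the closed span of the `G`-orbit of `A`,
there are `b₁, …, bₙ` (namely `bᵢ = aᵢ - P_C aᵢ + P_{C₀} aᵢ`) and a finite `A₀ ⊆ A` such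
that `‖aᵢ - bᵢ‖ < ε` and `bᵢ - P_{C₀} bᵢ` is orthogonal to `C ⊖ C₀`, where `C₀` is the
closed span of the `G`-orbit of `A₀`. -/
theorem superstable
    {G : Type*} [Group G] [Countable G] {H : Type*}
    [NormedAddCommGroup H] [InnerProductSpace ℂ H] [CompleteSpace H]
    (π : G →* (H ≃ₗᵢ[ℂ] H)) (n : ℕ) (a : Fin n → H) (A : Set H) (ε : ℝ) (hε : 0 < ε) :
    ∃ (b : Fin n → H) (A₀ : Finset H), ↑A₀ ⊆ A ∧
      (letI C := (Submodule.span ℂ {v : H | ∃ (g : G), ∃ x ∈ A, v = π g x}).topologicalClosure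
       letI C₀ :=
         (Submodule.span ℂ {v : H | ∃ (g : G), ∃ x ∈ (↑A₀ : Set H), v = π g x}).topologicalClosure
       ∀ i : Fin n,
         b i = a i - (C.orthogonalProjectionOnto (a i) : H) + (C₀.orthogonalProjectionOnto (a i) : H) ∧
         ‖a i - b i‖ < ε ∧
         ∀ v ∈ C, v ∈ C₀ᗮ →
           ⟪b i - (C₀.orthogonalProjectionOnto (b i) : H), v⟫_ℂ = 0) :=
  superstable_general π n a A ε hε
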